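/- arXiv:2205.13939 — 7 statements merged into one kernel-verified Lean document; each statement's English description precedes it below -/
import Mathlib

section
/- Let $s \in \mathbb{C}$ with $\rho := \Re s > 0$. For any complex Hilbert-space setting with $b_s(v,w) = s^2(\mu v,w)_\Omega + s(\gamma v,w)_{\Gamma_A} + (A\nabla v,\nabla w)_\Omega$ and the norm $\|v\|_{H^1_s}^2 = |s|^2\|v\|_{\mu,\Omega}^2 + (|s|^2/\rho)\|v\|_{\gamma,\Gamma_A}^2 + \|\nabla v\|_{A,\Omega}^2$, one has the coercivity identity $\|v\|_{H^1_s}^2 = \rho^{-1}\,\Re\, b_s(v, s v)$ and consequently $\|v\|_{H^1_s}^2 \le (|s|/\rho)\,|b_s(v,v)|$ for all $v$. -/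
/-
Pairing `b_s(v, ·)` with `s v` multiplies it by `conj s`, and
`conj s · (s² a + s b + c) = |s|² s a + |s|² b + conj s · c` has real part
`ρ (|s|² a + (|s|²/ρ) b + c)` for the nonnegative reals `a, b, c`; the bound then follows from
`Re z ≤ |z|`.
-/

open scoped ComplexInnerProductSpace

section WaveForm

variable {V Eμ Eγ Eg : Type*} [AddCommGroup V] [Module ℂ V]
  [NormedAddCommGroup Eμ] [InnerProductSpace ℂ Eμ]
  [NormedAddCommGroup Eγ] [InnerProductSpace ℂ Eγ]
  [NormedAddCommGroup Eg] [InnerProductSpace ℂ Eg]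
  (Mμ : V →ₗ[ℂ] Eμ) (Mγ : V →ₗ[ℂ] Eγ) (G : V →ₗ[ℂ] Eg)

/-- `b_s(v, w)` with `Mμ`, `Mγ`, `G` standing for `√μ ·`, `√γ ·|_{Γ_A}` and `A^{1/2} ∇`; the
arguments of the inner products are swapped because Mathlib's inner product is
conjugate-linear in its first slot. -/
noncomputable def waveForm (s : ℂ) (v w : V) : ℂ :=
  s ^ 2 * ⟪Mμ w, Mμ v⟫ + s * ⟪Mγ w, Mγ v⟫ + ⟪G w, G v⟫

theorem waveForm_smul_right (s c : ℂ) (v w : V) :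
    waveForm Mμ Mγ G s v (c • w) = (starRingEnd ℂ) c * waveForm Mμ Mγ G s v w := by
  simp only [waveForm, map_smul, inner_smul_left]
  ring

theorem re_waveForm_smul_self (s : ℂ) (v : V) :
    (waveForm Mμ Mγ G s v (s • v)).re =
      s.re * ‖s‖ ^ 2 * ‖Mμ v‖ ^ 2 + ‖s‖ ^ 2 * ‖Mγ v‖ ^ 2 + s.re * ‖G v‖ ^ 2 := by
  have hconj : (starRingEnd ℂ) s * s = (‖s‖ ^ 2 : ℝ) := by
    rw [Complex.conj_mul']; norm_cast
  have expand : (starRingEnd ℂ) s * waveForm Mμ Mγ G s v v =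
      (‖s‖ ^ 2 : ℝ) * s * (‖Mμ v‖ ^ 2 : ℝ) + (‖s‖ ^ 2 : ℝ) * (‖Mγ v‖ ^ 2 : ℝ)
        + (starRingEnd ℂ) s * (‖G v‖ ^ 2 : ℝ) := by
    simp only [waveForm, inner_self_eq_norm_sq_to_K, RCLike.ofReal_eq_complex_ofReal, ← hconj]
    push_cast
    ring
  rw [waveForm_smul_right, expand]
  simp only [Complex.add_re, Complex.mul_re, Complex.ofReal_re, Complex.ofReal_im,
    Complex.conj_re, Complex.conj_im]
  ring

theorem norm_waveForm_smul_right (s c : ℂ) (v w : V) :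
    ‖waveForm Mμ Mγ G s v (c • w)‖ = ‖c‖ * ‖waveForm Mμ Mγ G s v w‖ := by
  rw [waveForm_smul_right, norm_mul, Complex.norm_conj]

end WaveForm

theorem stmt0
    {V Eμ Eγ Eg : Type*} [AddCommGroup V] [Module ℂ V]
    [NormedAddCommGroup Eμ] [InnerProductSpace ℂ Eμ]
    [NormedAddCommGroup Eγ] [InnerProductSpace ℂ Eγ]
    [NormedAddCommGroup Eg] [InnerProductSpace ℂ Eg]
    (Mμ : V →ₗ[ℂ] Eμ) (Mγ : V →ₗ[ℂ] Eγ) (G : V →ₗ[ℂ] Eg)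
    (s : ℂ) (ρ : ℝ) (hρ : ρ = s.re) (hρpos : 0 < ρ)
    (bs : V → V → ℂ)
    (hbs : ∀ v w, bs v w =
      s ^ 2 * ⟪Mμ w, Mμ v⟫ + s * ⟪Mγ w, Mγ v⟫ + ⟪G w, G v⟫)
    (Hsq : V → ℝ)
    (hH : ∀ v, Hsq v = ‖s‖ ^ 2 * ‖Mμ v‖ ^ 2
      + (‖s‖ ^ 2 / ρ) * ‖Mγ v‖ ^ 2 + ‖G v‖ ^ 2)
    (v : V) :
    Hsq v = ρ⁻¹ * (bs v (s • v)).re ∧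
    Hsq v ≤ (‖s‖ / ρ) * ‖bs v v‖ := by
  have bs_eq : bs = waveForm Mμ Mγ G s := by
    funext v w; exact hbs v w
  subst bs_eq
  have identity : Hsq v = ρ⁻¹ * (waveForm Mμ Mγ G s v (s • v)).re := by
    rw [hH, re_waveForm_smul_self, ← hρ]
    field_simp
  refine ⟨identity, ?_⟩
  calc Hsq v = ρ⁻¹ * (waveForm Mμ Mγ G s v (s • v)).re := identity
    _ ≤ ρ⁻¹ * ‖waveForm Mμ Mγ G s v (s • v)‖ := by
      gcongr; exact Complex.re_le_norm _
    _ = (‖s‖ / ρ) * ‖waveForm Mμ Mγ G s v v‖ := by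
      rw [norm_waveForm_smul_right]; ring
end

section
/- Under the Aubin–Nitsche setting: let $s \in \mathbb{C}$, $\rho = \Re s > 0$, let $\hat\xi$ satisfy $b_s(\hat\xi, v) = \langle\hat{\mathscr{R}}, v\rangle$ for all $v \in \mathscr{H}^1_{\Gamma_D}(\Omega)$ with Galerkin orthogonality $\langle\hat{\mathscr{R}}, v_h\rangle = 0$ for all $v_h \in \mathscr{V}_h$, and let $\hat\gamma_{s,h}$ be the approximation factor defined via the adjoint solution operator $\mathscr{S}_s^\star$. Then $\{\hat\xi\}_{H^1_s(\Omega)} \le \hat\gamma_{s,h}\,\|\hat{\mathscr{R}}\|_{-1,\Omega}$, where $\{\phi\}_{H^1_s}^2 := |s|^2\|\phi\|_{\mu,\Omega}^2 + (|s|^2/\rho)\|\phi\|_{\gamma,\Gamma_A}^2$. -/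
/-!
Take `θ = S⋆ξ` in the adjoint problem: `{ξ}² = b_s(ξ, θ) = ⟨R̂, θ⟩`. Galerkin orthogonality lets
one replace `θ` by `θ - v_h` for the best discrete approximation `v_h`, so
`{ξ}² ≤ ‖R̂‖_{-1} ‖∇(θ - v_h)‖_A ≤ ‖R̂‖_{-1} γ̂ {ξ}`, and dividing by `{ξ}` gives the bound.
-/

open scoped ComplexInnerProductSpace

theorem Real.sqrt_le_of_le_mul_sqrt {x c : ℝ} (hc : 0 ≤ c) (h : x ≤ c * √x) : √x ≤ c := by
  rcases le_or_gt x 0 with hx | hx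
  · rwa [Real.sqrt_eq_zero'.mpr hx]
  · have hsqrt : 0 < √x := Real.sqrt_pos.mpr hx
    refine le_of_mul_le_mul_right ?_ hsqrt
    rwa [Real.mul_self_sqrt hx.le]

theorem norm_form_le_of_galerkin_orthogonal {V E : Type*} [AddCommGroup V] [Norm E]
    (b : V → V → ℂ) (ξ : V) (hb_sub : ∀ v w, b ξ (v - w) = b ξ v - b ξ w)
    (G : V → E) (R : V → ℂ) (Rnorm : ℝ) (hbound : ∀ v, ‖R v‖ ≤ Rnorm * ‖G v‖)
    (Vh : Set V) (hGal : ∀ vh ∈ Vh, R vh = 0) (hξ : ∀ v, b ξ v = R v)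
    (θ : V) {vh : V} (hvh : vh ∈ Vh) :
    ‖b ξ θ‖ ≤ Rnorm * ‖G (θ - vh)‖ := by
  have hθ : b ξ θ = b ξ (θ - vh) := by
    rw [hb_sub, hξ vh, hGal vh hvh, sub_zero]
  rw [hθ, hξ]
  exact hbound _

theorem stmt4_general
    {V Eμ Eγ Eg : Type*} [AddCommGroup V] [Module ℂ V]
    [NormedAddCommGroup Eμ] [InnerProductSpace ℂ Eμ]
    [NormedAddCommGroup Eγ] [InnerProductSpace ℂ Eγ]
    [NormedAddCommGroup Eg] [InnerProductSpace ℂ Eg]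
    (Mμ : V →ₗ[ℂ] Eμ) (Mγ : V →ₗ[ℂ] Eγ) (G : V →ₗ[ℂ] Eg)
    (s : ℂ) (ρ : ℝ)
    (bs : V → V → ℂ)
    (hbs : ∀ v w, bs v w =
      s ^ 2 * ⟪Mμ w, Mμ v⟫ + s * ⟪Mγ w, Mγ v⟫ + ⟪G w, G v⟫)
    (curlySq : V → ℝ)
    (hcurly : ∀ φ, curlySq φ = ‖s‖ ^ 2 * ‖Mμ φ‖ ^ 2
      + (‖s‖ ^ 2 / ρ) * ‖Mγ φ‖ ^ 2)
    (Vh : Submodule ℂ V)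
    (Sstar : V → V)
    (hS : ∀ φ w : V, bs w (Sstar φ) =
      ((‖s‖ ^ 2 : ℝ) : ℂ) * ⟪Mμ φ, Mμ w⟫
        + ((‖s‖ ^ 2 / ρ : ℝ) : ℂ) * ⟪Mγ φ, Mγ w⟫)
    (γhat : ℝ) (hγhat : 0 ≤ γhat)
    (happrox : ∀ φ : V, ∃ vh ∈ Vh,
      ‖G (Sstar φ - vh)‖ ≤ γhat * Real.sqrt (curlySq φ))
    (R : V → ℂ) (Rnorm : ℝ) (hRnorm : 0 ≤ Rnorm)
    (hbound : ∀ v : V, ‖R v‖ ≤ Rnorm * ‖G v‖)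
    (hGal : ∀ vh ∈ Vh, R vh = 0)
    (ξ : V) (hξ : ∀ v : V, bs ξ v = R v) :
    Real.sqrt (curlySq ξ) ≤ γhat * Rnorm := by
  have hbs_sub : ∀ v w, bs ξ (v - w) = bs ξ v - bs ξ w := by
    intro v w
    simp only [hbs, map_sub, inner_sub_left]
    ring
  have henergy : ((curlySq ξ : ℝ) : ℂ) = bs ξ (Sstar ξ) := by
    rw [hS, hcurly]
    simp only [inner_self_eq_norm_sq_to_K, Complex.ofReal_add, Complex.ofReal_mul,
      Complex.ofReal_pow]
    rfl
  obtain ⟨vh, hvh, happrox_ξ⟩ := happrox ξ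
  refine Real.sqrt_le_of_le_mul_sqrt (mul_nonneg hγhat hRnorm) ?_
  calc curlySq ξ ≤ ‖((curlySq ξ : ℝ) : ℂ)‖ := by
        rw [Complex.norm_real]; exact Real.le_norm_self _
    _ = ‖bs ξ (Sstar ξ)‖ := by rw [henergy]
    _ ≤ Rnorm * ‖G (Sstar ξ - vh)‖ :=
        norm_form_le_of_galerkin_orthogonal bs ξ hbs_sub G R Rnorm hbound Vh hGal hξ _ hvh
    _ ≤ Rnorm * (γhat * Real.sqrt (curlySq ξ)) := mul_le_mul_of_nonneg_left happrox_ξ hRnorm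
    _ = γhat * Rnorm * Real.sqrt (curlySq ξ) := by ring

theorem stmt4
    {V Eμ Eγ Eg : Type*} [AddCommGroup V] [Module ℂ V]
    [NormedAddCommGroup Eμ] [InnerProductSpace ℂ Eμ]
    [NormedAddCommGroup Eγ] [InnerProductSpace ℂ Eγ]
    [NormedAddCommGroup Eg] [InnerProductSpace ℂ Eg]
    (Mμ : V →ₗ[ℂ] Eμ) (Mγ : V →ₗ[ℂ] Eγ) (G : V →ₗ[ℂ] Eg)
    (s : ℂ) (ρ : ℝ) (hρ : ρ = s.re) (hρpos : 0 < ρ)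
    (bs : V → V → ℂ)
    (hbs : ∀ v w, bs v w =
      s ^ 2 * ⟪Mμ w, Mμ v⟫ + s * ⟪Mγ w, Mγ v⟫ + ⟪G w, G v⟫)
    (curlySq : V → ℝ)
    (hcurly : ∀ φ, curlySq φ = ‖s‖ ^ 2 * ‖Mμ φ‖ ^ 2
      + (‖s‖ ^ 2 / ρ) * ‖Mγ φ‖ ^ 2)
    (Vh : Submodule ℂ V)
    (Sstar : V → V)
    (hS : ∀ φ w : V, bs w (Sstar φ) =
      ((‖s‖ ^ 2 : ℝ) : ℂ) * ⟪Mμ φ, Mμ w⟫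
        + ((‖s‖ ^ 2 / ρ : ℝ) : ℂ) * ⟪Mγ φ, Mγ w⟫)
    (γhat : ℝ) (hγhat : 0 ≤ γhat)
    (happrox : ∀ φ : V, ∃ vh ∈ Vh,
      ‖G (Sstar φ - vh)‖ ≤ γhat * Real.sqrt (curlySq φ))
    (R : V → ℂ) (Rnorm : ℝ) (hRnorm : 0 ≤ Rnorm)
    (hbound : ∀ v : V, ‖R v‖ ≤ Rnorm * ‖G v‖)
    (hGal : ∀ vh ∈ Vh, R vh = 0)
    (ξ : V) (hξ : ∀ v : V, bs ξ v = R v) :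
    Real.sqrt (curlySq ξ) ≤ γhat * Rnorm :=
  stmt4_general Mμ Mγ G s ρ bs hbs curlySq hcurly Vh Sstar hS γhat hγhat happrox R Rnorm hRnorm
    hbound hGal ξ hξ
end

section
/- With Galerkin orthogonality and the approximation factor $\hat\gamma_{s,h}$ as above, the frequency-domain error satisfies the asymptotically constant-free bound $\|\hat\xi\|_{H^1_s(\Omega)}^2 \le (1 + 4\hat\gamma_{s,h}^2)\,\|\hat{\mathscr{R}}\|_{-1,\Omega}^2$. -/
/-!
Testing the error equation against `ξ̂` itself, the real part of `b_s(ξ̂, ξ̂)` controls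
`‖∇ξ̂‖²` up to `|s|²‖ξ̂‖²_μ` (the `γ`-term has the good sign `Re s > 0`), and Young's
inequality turns this into `‖∇ξ̂‖² ≤ ‖R̂‖² + 2{ξ̂}²`. The lower-order part `{ξ̂}²` is bounded by
duality: the adjoint solution `S* ξ̂` satisfies `b_s(ξ̂, S* ξ̂) = {ξ̂}²`, and by Galerkin
orthogonality `S* ξ̂` may be replaced by its error against `V_h`, whence `{ξ̂} ≤ γ̂ ‖R̂‖`.
-/

open scoped ComplexInnerProductSpace

theorem inner_self_eq_ofReal_norm_sq {E : Type*} [NormedAddCommGroup E] [InnerProductSpace ℂ E]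
    (x : E) : ⟪x, x⟫ = ((‖x‖ ^ 2 : ℝ) : ℂ) := by
  simp [inner_self_eq_norm_sq_to_K]

theorem Real.le_sq_of_le_mul_sqrt {a c : ℝ} (hc : 0 ≤ c) (h : c ≤ a * √c) : c ≤ a ^ 2 := by
  rcases (Real.sqrt_nonneg c).eq_or_lt with h0 | h0
  · rw [(Real.sqrt_eq_zero hc).mp h0.symm]
    positivity
  · have hsqrt : √c ≤ a :=
      le_of_mul_le_mul_right (by rwa [Real.mul_self_sqrt hc]) h0
    calc c = √c ^ 2 := (Real.sq_sqrt hc).symm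
      _ ≤ a ^ 2 := pow_le_pow_left₀ (Real.sqrt_nonneg c) hsqrt 2

theorem sq_le_sq_add_two_mul_of_sq_le_mul_add {g r c : ℝ} (h : g ^ 2 ≤ r * g + c) :
    g ^ 2 ≤ r ^ 2 + 2 * c := by
  nlinarith [sq_nonneg (r - g)]

section LaplaceForm

variable {V Eμ Eγ Eg : Type*} [AddCommGroup V] [Module ℂ V]
    [NormedAddCommGroup Eμ] [InnerProductSpace ℂ Eμ]
    [NormedAddCommGroup Eγ] [InnerProductSpace ℂ Eγ]
    [NormedAddCommGroup Eg] [InnerProductSpace ℂ Eg]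
    (Mμ : V →ₗ[ℂ] Eμ) (Mγ : V →ₗ[ℂ] Eγ) (G : V →ₗ[ℂ] Eg) (s : ℂ)

noncomputable def laplaceForm (v w : V) : ℂ :=
  s ^ 2 * ⟪Mμ w, Mμ v⟫ + s * ⟪Mγ w, Mγ v⟫ + ⟪G w, G v⟫

theorem laplaceForm_sub_right (v w w' : V) :
    laplaceForm Mμ Mγ G s v (w - w') =
      laplaceForm Mμ Mγ G s v w - laplaceForm Mμ Mγ G s v w' := by
  simp only [laplaceForm, map_sub, inner_sub_left]
  ring

theorem re_laplaceForm_self (v : V) :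
    (laplaceForm Mμ Mγ G s v v).re =
      (s ^ 2).re * ‖Mμ v‖ ^ 2 + s.re * ‖Mγ v‖ ^ 2 + ‖G v‖ ^ 2 := by
  simp only [laplaceForm, inner_self_eq_ofReal_norm_sq, Complex.add_re, Complex.re_mul_ofReal,
    Complex.ofReal_re]

theorem norm_sq_le_re_laplaceForm_self {s : ℂ} (hs : 0 ≤ s.re) (v : V) :
    ‖G v‖ ^ 2 ≤ (laplaceForm Mμ Mγ G s v v).re + ‖s‖ ^ 2 * ‖Mμ v‖ ^ 2 := by
  have hs2 : -(‖s‖ ^ 2) ≤ (s ^ 2).re := by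
    have := Complex.abs_re_le_norm (s ^ 2)
    rw [norm_pow] at this
    exact (abs_le.mp this).1
  rw [re_laplaceForm_self]
  nlinarith [mul_nonneg hs (sq_nonneg ‖Mγ v‖), sq_nonneg ‖Mμ v‖]

end LaplaceForm

theorem stmt5_general
    {V Eμ Eγ Eg : Type*} [AddCommGroup V] [Module ℂ V]
    [NormedAddCommGroup Eμ] [InnerProductSpace ℂ Eμ]
    [NormedAddCommGroup Eγ] [InnerProductSpace ℂ Eγ]
    [NormedAddCommGroup Eg] [InnerProductSpace ℂ Eg]
    (Mμ : V →ₗ[ℂ] Eμ) (Mγ : V →ₗ[ℂ] Eγ) (G : V →ₗ[ℂ] Eg)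
    (s : ℂ) (ρ : ℝ) (hρ : ρ = s.re) (hρpos : 0 < ρ)
    (bs : V → V → ℂ)
    (hbs : ∀ v w, bs v w =
      s ^ 2 * ⟪Mμ w, Mμ v⟫ + s * ⟪Mγ w, Mγ v⟫ + ⟪G w, G v⟫)
    (Hsq : V → ℝ)
    (hH : ∀ v, Hsq v = ‖s‖ ^ 2 * ‖Mμ v‖ ^ 2
      + (‖s‖ ^ 2 / ρ) * ‖Mγ v‖ ^ 2 + ‖G v‖ ^ 2)
    (curlySq : V → ℝ)
    (hcurly : ∀ φ, curlySq φ = ‖s‖ ^ 2 * ‖Mμ φ‖ ^ 2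
      + (‖s‖ ^ 2 / ρ) * ‖Mγ φ‖ ^ 2)
    (Vh : Submodule ℂ V)
    (Sstar : V → V)
    (hS : ∀ φ w : V, bs w (Sstar φ) =
      ((‖s‖ ^ 2 : ℝ) : ℂ) * ⟪Mμ φ, Mμ w⟫
        + ((‖s‖ ^ 2 / ρ : ℝ) : ℂ) * ⟪Mγ φ, Mγ w⟫)
    (γhat : ℝ)
    (happrox : ∀ φ : V, ∃ vh ∈ Vh,
      ‖G (Sstar φ - vh)‖ ≤ γhat * Real.sqrt (curlySq φ))
    (R : V → ℂ) (Rnorm : ℝ) (hRnorm : 0 ≤ Rnorm)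
    (hbound : ∀ v : V, ‖R v‖ ≤ Rnorm * ‖G v‖)
    (hGal : ∀ vh ∈ Vh, R vh = 0)
    (ξ : V) (hξ : ∀ v : V, bs ξ v = R v) :
    Hsq ξ ≤ (1 + 4 * γhat ^ 2) * Rnorm ^ 2 := by
  obtain rfl : bs = laplaceForm Mμ Mγ G s := funext₂ hbs
  have hMμ_le : ‖s‖ ^ 2 * ‖Mμ ξ‖ ^ 2 ≤ curlySq ξ := by
    rw [hcurly]
    have := div_nonneg (sq_nonneg ‖s‖) hρpos.le
    nlinarith [sq_nonneg ‖Mγ ξ‖]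
  have hcurly_nonneg : 0 ≤ curlySq ξ := le_trans (by positivity) hMμ_le
  have hdual : laplaceForm Mμ Mγ G s ξ (Sstar ξ) = curlySq ξ := by
    rw [hS, hcurly, inner_self_eq_ofReal_norm_sq, inner_self_eq_ofReal_norm_sq]
    push_cast
    ring
  obtain ⟨vh, hvh, hGvh⟩ := happrox ξ
  have hresidual : R (Sstar ξ - vh) = curlySq ξ := by
    rw [← hξ, laplaceForm_sub_right, hdual, hξ vh, hGal vh hvh, sub_zero]
  have hcurly_le : curlySq ξ ≤ γhat ^ 2 * Rnorm ^ 2 := by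
    rw [← mul_pow]
    refine Real.le_sq_of_le_mul_sqrt hcurly_nonneg ?_
    calc curlySq ξ = ‖R (Sstar ξ - vh)‖ := by
          rw [hresidual, Complex.norm_of_nonneg hcurly_nonneg]
      _ ≤ Rnorm * ‖G (Sstar ξ - vh)‖ := hbound _
      _ ≤ Rnorm * (γhat * √(curlySq ξ)) := mul_le_mul_of_nonneg_left hGvh hRnorm
      _ = γhat * Rnorm * √(curlySq ξ) := by ring
  have henergy : ‖G ξ‖ ^ 2 ≤ Rnorm * ‖G ξ‖ + curlySq ξ := by
    have hre : (laplaceForm Mμ Mγ G s ξ ξ).re ≤ Rnorm * ‖G ξ‖ :=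
      (Complex.re_le_norm _).trans (hξ ξ ▸ hbound ξ)
    linarith [norm_sq_le_re_laplaceForm_self Mμ Mγ G (hρ ▸ hρpos.le) ξ]
  have hG_le := sq_le_sq_add_two_mul_of_sq_le_mul_add henergy
  rw [hH, ← hcurly]
  nlinarith [mul_nonneg (sq_nonneg γhat) (sq_nonneg Rnorm)]

theorem stmt5
    {V Eμ Eγ Eg : Type*} [AddCommGroup V] [Module ℂ V]
    [NormedAddCommGroup Eμ] [InnerProductSpace ℂ Eμ]
    [NormedAddCommGroup Eγ] [InnerProductSpace ℂ Eγ]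
    [NormedAddCommGroup Eg] [InnerProductSpace ℂ Eg]
    (Mμ : V →ₗ[ℂ] Eμ) (Mγ : V →ₗ[ℂ] Eγ) (G : V →ₗ[ℂ] Eg)
    (s : ℂ) (ρ : ℝ) (hρ : ρ = s.re) (hρpos : 0 < ρ)
    (bs : V → V → ℂ)
    (hbs : ∀ v w, bs v w =
      s ^ 2 * ⟪Mμ w, Mμ v⟫ + s * ⟪Mγ w, Mγ v⟫ + ⟪G w, G v⟫)
    (Hsq : V → ℝ)
    (hH : ∀ v, Hsq v = ‖s‖ ^ 2 * ‖Mμ v‖ ^ 2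
      + (‖s‖ ^ 2 / ρ) * ‖Mγ v‖ ^ 2 + ‖G v‖ ^ 2)
    (curlySq : V → ℝ)
    (hcurly : ∀ φ, curlySq φ = ‖s‖ ^ 2 * ‖Mμ φ‖ ^ 2
      + (‖s‖ ^ 2 / ρ) * ‖Mγ φ‖ ^ 2)
    (Vh : Submodule ℂ V)
    (Sstar : V → V)
    (hS : ∀ φ w : V, bs w (Sstar φ) =
      ((‖s‖ ^ 2 : ℝ) : ℂ) * ⟪Mμ φ, Mμ w⟫
        + ((‖s‖ ^ 2 / ρ : ℝ) : ℂ) * ⟪Mγ φ, Mγ w⟫)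
    (γhat : ℝ) (hγhat : 0 ≤ γhat)
    (happrox : ∀ φ : V, ∃ vh ∈ Vh,
      ‖G (Sstar φ - vh)‖ ≤ γhat * Real.sqrt (curlySq φ))
    (R : V → ℂ) (Rnorm : ℝ) (hRnorm : 0 ≤ Rnorm)
    (hbound : ∀ v : V, ‖R v‖ ≤ Rnorm * ‖G v‖)
    (hGal : ∀ vh ∈ Vh, R vh = 0)
    (ξ : V) (hξ : ∀ v : V, bs ξ v = R v) :
    Hsq ξ ≤ (1 + 4 * γhat ^ 2) * Rnorm ^ 2 :=
  stmt5_general Mμ Mγ G s ρ hρ hρpos bs hbs Hsq hH curlySq hcurly Vh Sstar hS γhat happrox R Rnorm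
    hRnorm hbound hGal ξ hξ
end

section
/- Assume $\Omega$ is convex, $A \equiv I$, $\Gamma_A = \emptyset$, and the interpolation estimate $\min_{v_h \in \mathscr{V}_h}\|\nabla(v - v_h)\|_\Omega \le C_i h_{\max}\|\nabla^2 v\|_\Omega$ holds for $v \in \mathscr{H}^2(\Omega) \cap \mathscr{H}^1_0(\Omega)$, together with the elliptic regularity identity $\|\nabla^2 w\|_\Omega = \|\Delta w\|_\Omega$ for $w \in \mathscr{H}^2 \cap \mathscr{H}^1_0(\Omega)$. Then for $s \in \mathbb{C}$ with $\rho = \Re s > 0$, the approximation factor satisfies $\hat\gamma_{s,h} \le 2 C_i (|s|/\rho)(|s| h_{\max}/\vartheta_{\min})$. -/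
/-!
By the interpolation estimate and elliptic regularity, the best-approximation error of `S⋆φ` is
at most `C_i h_max ‖Δ S⋆φ‖`. The adjoint equation gives `‖Δ S⋆φ‖ ≤ |s|² (‖μ S⋆φ‖ + ‖μ φ‖)`, the
bound `μ ≤ ϑ_min⁻²` turns this into `|s|² ϑ_min⁻¹ (‖S⋆φ‖_μ + ‖φ‖_μ)`, and stability together
with `1 ≤ |s|/ρ` bounds the sum by `2 (|s|/ρ) ‖φ‖_μ`.
-/

lemma Complex.one_le_norm_div_re {s : ℂ} (hs : 0 < s.re) : 1 ≤ ‖s‖ / s.re :=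
  (one_le_div hs).mpr s.re_le_norm

lemma norm_smul_sub_smul_le {𝕜 E : Type*} [NormedField 𝕜] [SeminormedAddCommGroup E]
    [NormedSpace 𝕜 E] (c : 𝕜) (x y : E) : ‖c • x - c • y‖ ≤ ‖c‖ * (‖x‖ + ‖y‖) := by
  rw [← smul_sub, norm_smul]
  gcongr
  exact norm_sub_le x y

lemma add_le_two_mul_of_stability {s : ℂ} (hs : 0 < s.re) {a b : ℝ} (hb : 0 ≤ b)
    (hstab : ‖s‖ * a ≤ ‖s‖ / s.re * (‖s‖ * b)) : a + b ≤ 2 * (‖s‖ / s.re * b) := by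
  have hs_norm : 0 < ‖s‖ := hs.trans_le s.re_le_norm
  have ha : a ≤ ‖s‖ / s.re * b :=
    le_of_mul_le_mul_left (by linarith [mul_left_comm ‖s‖ (‖s‖ / s.re) b]) hs_norm
  have hb' : b ≤ ‖s‖ / s.re * b := le_mul_of_one_le_left hb (Complex.one_le_norm_div_re hs)
  linarith

open scoped ComplexInnerProductSpace

/- `Mμ v` models `√μ v`, so that `{φ}_{H¹_s} = |s| ‖Mμ φ‖` (as `Γ_A = ∅`); `G v` models `∇v`,
`Δop w` and `Mw w` model `Δw` and `μ w` in `L²(Ω)`, and `D2 w = ‖∇²w‖_Ω`. -/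
theorem stmt7
    {V Eμ Eg E0 : Type*} [AddCommGroup V] [Module ℂ V]
    [NormedAddCommGroup Eμ] [InnerProductSpace ℂ Eμ]
    [NormedAddCommGroup Eg] [InnerProductSpace ℂ Eg]
    [NormedAddCommGroup E0] [InnerProductSpace ℂ E0]
    (Mμ : V →ₗ[ℂ] Eμ) (G : V →ₗ[ℂ] Eg) (Δop : V →ₗ[ℂ] E0) (Mw : V →ₗ[ℂ] E0)
    (D2 : V → ℝ)
    (s : ℂ) (ρ : ℝ) (hρ : ρ = s.re) (hρpos : 0 < ρ)
    (Ci hmax ϑmin : ℝ) (hCi : 0 ≤ Ci) (hhmax : 0 ≤ hmax) (hϑ : 0 < ϑmin)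
    (Vh : Submodule ℂ V)
    (Sstar : V → V)
    -- interpolation estimate (Ω convex, A ≡ I):
    (hinterp : ∀ w : V, ∃ vh ∈ Vh, ‖G (w - vh)‖ ≤ Ci * hmax * D2 w)
    -- elliptic regularity identity ‖∇²w‖ = ‖Δw‖:
    (hellreg : ∀ w : V, D2 w = ‖Δop w‖)
    -- adjoint equation: -Δ S⋆φ = s² μ φ - s² μ S⋆φ:
    (hPDE : ∀ φ : V, Δop (Sstar φ) = s ^ 2 • Mw (Sstar φ) - s ^ 2 • Mw φ)
    -- μ ≤ ϑ_min⁻² :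
    (hweight : ∀ w : V, ‖Mw w‖ ≤ ϑmin⁻¹ * ‖Mμ w‖)
    -- stability of the adjoint solution: |s|‖S⋆φ‖_μ ≤ (|s|/ρ) {φ}_{H¹_s}:
    (hstab : ∀ φ : V, ‖s‖ * ‖Mμ (Sstar φ)‖ ≤
      (‖s‖ / ρ) * (‖s‖ * ‖Mμ φ‖)) :
    ∀ φ : V, ∃ vh ∈ Vh,
      ‖G (Sstar φ - vh)‖ ≤
        2 * Ci * (‖s‖ / ρ) * (‖s‖ * hmax / ϑmin)
          * (‖s‖ * ‖Mμ φ‖) := by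
  subst hρ
  intro φ
  obtain ⟨vh, hvh, hinterp_φ⟩ := hinterp (Sstar φ)
  refine ⟨vh, hvh, ?_⟩
  calc ‖G (Sstar φ - vh)‖
      ≤ Ci * hmax * ‖Δop (Sstar φ)‖ := hellreg (Sstar φ) ▸ hinterp_φ
    _ ≤ Ci * hmax * (‖s‖ ^ 2 * (‖Mw (Sstar φ)‖ + ‖Mw φ‖)) := by
        rw [hPDE, ← norm_pow]
        gcongr
        exact norm_smul_sub_smul_le _ _ _
    _ ≤ Ci * hmax * (‖s‖ ^ 2 * (ϑmin⁻¹ * (‖Mμ (Sstar φ)‖ + ‖Mμ φ‖))) := by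
        rw [mul_add ϑmin⁻¹]
        gcongr
        exacts [hweight _, hweight _]
    _ ≤ Ci * hmax * (‖s‖ ^ 2 * (ϑmin⁻¹ * (2 * (‖s‖ / s.re * ‖Mμ φ‖)))) := by
        gcongr
        exact add_le_two_mul_of_stability hρpos (norm_nonneg _) (hstab φ)
    _ = 2 * Ci * (‖s‖ / s.re) * (‖s‖ * hmax / ϑmin) * (‖s‖ * ‖Mμ φ‖) := by
        ring
end

section
/- Partition-of-unity localization of the residual norm: let $\mathscr{R}$ be a bounded linear functional on $H^1_{\Gamma_D}(\Omega)$, let $(\psi_a)_{a \in \mathcal{V}_h}$ be the piecewise-affine hat functions forming a partition of unity on $\Omega$ subordinate to patches $\omega_a$, with each simplex of the mesh contained in exactly $d+1$ patches. Then $\|\mathscr{R}\|_{-1,\Omega}^2 \le (d+1)\sum_{a \in \mathcal{V}_h}\|\mathscr{R}\|_{-1,a}^2$, where $\|\mathscr{R}\|_{-1,\Omega} = \sup_{\|\nabla v\|_{A,\Omega}=1}\langle\mathscr{R},v\rangle$ and $\|\mathscr{R}\|_{-1,a} = \sup\{\langle\mathscr{R},\psi_a v\rangle : v \in H^1_\star(\omega_a),\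 \|\nabla v\|_{A,\omega_a} = 1\}$. -/
open scoped RealInnerProductSpace

theorem stmt11 {V W : Type*} [AddCommGroup V] [Module ℝ V]
    [NormedAddCommGroup W] [InnerProductSpace ℝ W]
    {ι : Type*} [Fintype ι] (d : ℕ)
    (G : V →ₗ[ℝ] W) (R : V →ₗ[ℝ] ℝ)
    (P : ι → V →ₗ[ℝ] V) (n : ι → V → ℝ) (N : ι → ℝ)
    (hN : ∀ a, 0 ≤ N a) (hn : ∀ a v, 0 ≤ n a v)
    (hPU : ∀ v : V, ∑ a, P a v = v)
    (hloc : ∀ a (v : V), |R (P a v)| ≤ N a * n a v)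
    (hoverlap : ∀ v : V, ∑ a, (n a v) ^ 2 ≤ (d + 1 : ℝ) * ‖G v‖ ^ 2) :
    ∀ v : V, (R v) ^ 2 ≤ (d + 1 : ℝ) * (∑ a, (N a) ^ 2) * ‖G v‖ ^ 2 := by
  intro v
  have h1 : (R v) ^ 2 ≤ (∑ a, N a * n a v) ^ 2 := by
    have habs : |R v| ≤ ∑ a, N a * n a v := by
      calc |R v| = |∑ a, R (P a v)| := by rw [← map_sum, hPU]
      _ ≤ ∑ a, |R (P a v)| := Finset.abs_sum_le_sum_abs _ _
      _ ≤ ∑ a, N a * n a v := Finset.sum_le_sum fun a _ => hloc a v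
    calc (R v)^2 = |R v|^2 := (sq_abs _).symm
    _ ≤ (∑ a, N a * n a v)^2 := by
        apply pow_le_pow_left₀ (abs_nonneg _) habs
  have h2 : (∑ a, N a * n a v) ^ 2 ≤ (∑ a, (N a)^2) * (∑ a, (n a v)^2) :=
    Finset.sum_mul_sq_le_sq_mul_sq Finset.univ N (fun a => n a v)
  have h3 : (∑ a, (N a)^2) * (∑ a, (n a v)^2) ≤ (∑ a, (N a)^2) * ((d+1:ℝ) * ‖G v‖^2) :=
    mul_le_mul_of_nonneg_left (hoverlap v) (Finset.sum_nonneg fun a _ => sq_nonneg _)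
  calc (R v)^2 ≤ (∑ a, (N a)^2) * ((d+1:ℝ) * ‖G v‖^2) := le_trans h1 (le_trans h2 h3)
  _ = (d + 1 : ℝ) * (∑ a, (N a) ^ 2) * ‖G v‖ ^ 2 := by ring
end

section
/- Prager–Synge type estimate for the wave residual: let $\tau \in H(\mathrm{div},\Omega)$ satisfy $\mathrm{div}\,\tau = \mu(f - \ddot u_h)$ in $\Omega$ and $\tau\cdot n = \gamma(g - \dot u_h)$ on $\Gamma_A$ (at a fixed time $t$). Then the residual $\langle\mathscr{R},v\rangle := (\mu(f - \ddot u_h),v)_\Omega + (\gamma(g - \dot u_h),v)_{\Gamma_A} - (A\nabla u_h,\nabla v)_\Omega$ satisfies $\|\mathscr{R}\|_{-1,\Omega} \le \|A^{-1}\tau + \nabla u_h\|_{A,\Omega}$, where $\|\mathscr{R}\|_{-1,\Omega} = \sup\{\langle\mathscr{R},v\rangle : v \in H^1_{\Gamma_D}(\Omega),\ \|\nabla v\|_{A,\Omega} = 1\}$. -/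
open scoped RealInnerProductSpace

theorem stmt12 {V Eμ Eγ W : Type*} [AddCommGroup V] [Module ℝ V]
    [NormedAddCommGroup Eμ] [InnerProductSpace ℝ Eμ]
    [NormedAddCommGroup Eγ] [InnerProductSpace ℝ Eγ]
    [NormedAddCommGroup W] [InnerProductSpace ℝ W]
    (Mμ : V →ₗ[ℝ] Eμ) (Mγ : V →ₗ[ℝ] Eγ) (G : V →ₗ[ℝ] W)
    (F : Eμ) (Gd : Eγ) (uh : V) (T : W)
    (hdiv : ∀ v : V, ⟪F, Mμ v⟫ + ⟪Gd, Mγ v⟫ + ⟪T, G v⟫ = 0)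
    (R : V → ℝ)
    (hR : ∀ v : V, R v = ⟪F, Mμ v⟫ + ⟪Gd, Mγ v⟫ - ⟪G uh, G v⟫) :
    ∀ v : V, |R v| ≤ ‖T + G uh‖ * ‖G v‖ := by
  intro v
  have h : R v = -⟪T + G uh, G v⟫ := by
    have := hdiv v
    rw [hR v, inner_add_left]
    linarith
  rw [h, abs_neg]
  exact abs_real_inner_le_norm _ _
end

section
/- Global efficiency (abstract form): assume the local efficiency bounds $\|\mathscr{R}(t)\|_{-1,a} \le C_{geo,a}((h_a/\vartheta_a)\|\ddot\xi(t)\|_{\mu,\omega_a} + (\rho h_a/\vartheta_a)^{1/2}\rho^{-1/2}\|\dot\xi(t)\|_{\gamma,\omega_a\cap\Gamma_A} + \kappa_{A,a}\|\nabla\xi(t)\|_{A,\omega_a})$ hold for every vertex $a$ and time $t$, together with the overlap bound $\|\mathscr{R}(t)\|_{-1,\Omega}^2 \le (d+1)\sum_a\|\mathscr{R}(t)\|_{-1,a}^2$ and the second-derivative estimate $\||\ddot\xi e^{-\rho t}\||_{\mu,\Omega}^2 \le \omega^2\||\dot\xi e^{-\rho t}\||_{\mu,\Omega}^2 + \rho^2(\rho/\omega)^{2r}\mathrm{osc}_{\rho,r+1}^2$.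 Then $\int_0^\infty\|\mathscr{R}(t)\|_{-1,\Omega}^2 e^{-2\rho t}dt \le C_{geo}^2\{(\kappa_A + \rho h_\star/\vartheta_\star + (\omega h_\star/\vartheta_\star)^2)\|||\xi|||_\rho^2 + (\rho h_\star/\vartheta_\star)^2(\rho/\omega)^{2r}\mathrm{osc}_{\rho,r+1}^2\}$ for all $\omega > 0$, $r \in \mathbb{N}$, where $h_\star/\vartheta_\star = \max_a h_a/\vartheta_a$, $\kappa_A = \max_a\kappa_{A,a}$, and $C_{geo}$ depends only on the local constants $C_{geo,a}$ and $d$. -/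
/- STATEMENT 17: global efficiency of the idealized estimator.
`Rnorm t = ‖R(t)‖_{-1,Ω}`, `Rloc a t = ‖R(t)‖_{-1,a}`;
`Nμ2 a t = ‖ξ̈(t)‖_{μ,ω_a}`, `Nγ1 a t = ‖ξ̇(t)‖_{γ,ω_a∩Γ_A}`,
`NA a t = ‖∇ξ(t)‖_{A,ω_a}` with global counterparts `Xμ2, Xγ1, XA` and
`Xμ1 t = ‖ξ̇(t)‖_{μ,Ω}`.  The local efficiency bounds (with `κ_{A,a}^{1/2}`,
Lemma "local efficiency"), the patch-overlap bounds, and the second-derivative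
estimate are hypotheses; the conclusion is the global efficiency estimate with
`C_geo = 3(d+1) max_a C_geo,a` and `h_⋆/ϑ_⋆ = max_a h_a/ϑ_a`. -/

open MeasureTheory

set_option maxHeartbeats 1000000

lemma stmt17_aux {R C x y z : ℝ} (hR : 0 ≤ R) (hC : 0 ≤ C)
    (hx : 0 ≤ x) (hy : 0 ≤ y) (hz : 0 ≤ z) (hle : R ≤ C * (x + y + z)) :
    R ^ 2 ≤ 3 * C ^ 2 * (x ^ 2 + y ^ 2 + z ^ 2) := by
  have h1 : R ^ 2 ≤ (C * (x + y + z)) ^ 2 := pow_le_pow_left₀ hR hle 2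
  nlinarith [sq_nonneg (x - y), sq_nonneg (y - z), sq_nonneg (x - z), sq_nonneg C,
    mul_nonneg (mul_nonneg hC hC) (sq_nonneg (x - y)),
    mul_nonneg (mul_nonneg hC hC) (sq_nonneg (y - z)),
    mul_nonneg (mul_nonneg hC hC) (sq_nonneg (x - z))]

theorem stmt17 {ι : Type*} [Fintype ι] [Nonempty ι] (d : ℕ)
    (ρ ω hs κA osc Cmax : ℝ) (r : ℕ)
    (hρ : 0 < ρ) (hω : 0 < ω) (hhs : 0 ≤ hs) (hκA : 0 ≤ κA)
    (hosc : 0 ≤ osc) (hCmax : 0 ≤ Cmax)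
    (h ϑ κ Cg : ι → ℝ)
    (hϑ : ∀ a, 0 < ϑ a) (hha : ∀ a, 0 ≤ h a)
    (hhs' : ∀ a, h a / ϑ a ≤ hs)
    (hκ : ∀ a, 0 ≤ κ a ∧ κ a ≤ κA)
    (hCg : ∀ a, 0 ≤ Cg a ∧ Cg a ≤ Cmax)
    (Rnorm : ℝ → ℝ) (Rloc : ι → ℝ → ℝ)
    (Nμ2 Nγ1 NA : ι → ℝ → ℝ) (Xμ2 Xμ1 Xγ1 XA : ℝ → ℝ)
    (hRnn : ∀ t, 0 ≤ Rnorm t) (hRlnn : ∀ a t, 0 ≤ Rloc a t)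
    (hNnn : ∀ a t, 0 ≤ Nμ2 a t ∧ 0 ≤ Nγ1 a t ∧ 0 ≤ NA a t)
    (hXnn : ∀ t, 0 ≤ Xμ2 t ∧ 0 ≤ Xμ1 t ∧ 0 ≤ Xγ1 t ∧ 0 ≤ XA t)
    -- local efficiency (Lemma "local efficiency", for each vertex and time)
    (hloc : ∀ a t, Rloc a t ≤ Cg a * ((h a / ϑ a) * Nμ2 a t
      + Real.sqrt (ρ * (h a / ϑ a)) * (Real.sqrt ρ)⁻¹ * Nγ1 a t
      + Real.sqrt (κ a) * NA a t))
    -- overlap bounds (each simplex belongs to d+1 patches)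
    (hover : ∀ t, Rnorm t ^ 2 ≤ (d + 1 : ℝ) * ∑ a, Rloc a t ^ 2)
    (hoverμ : ∀ t, ∑ a, Nμ2 a t ^ 2 ≤ (d + 1 : ℝ) * Xμ2 t ^ 2)
    (hoverγ : ∀ t, ∑ a, Nγ1 a t ^ 2 ≤ (d + 1 : ℝ) * Xγ1 t ^ 2)
    (hoverA : ∀ t, ∑ a, NA a t ^ 2 ≤ (d + 1 : ℝ) * XA t ^ 2)
    -- integrability of the damped squared quantities
    (hIR : Integrable (fun t => Rnorm t ^ 2 * Real.exp (-2 * ρ * t))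
      (volume.restrict (Set.Ioi 0)))
    (hIμ2 : Integrable (fun t => Xμ2 t ^ 2 * Real.exp (-2 * ρ * t))
      (volume.restrict (Set.Ioi 0)))
    (hIμ1 : Integrable (fun t => Xμ1 t ^ 2 * Real.exp (-2 * ρ * t))
      (volume.restrict (Set.Ioi 0)))
    (hIγ1 : Integrable (fun t => Xγ1 t ^ 2 * Real.exp (-2 * ρ * t))
      (volume.restrict (Set.Ioi 0)))
    (hIA : Integrable (fun t => XA t ^ 2 * Real.exp (-2 * ρ * t))
      (volume.restrict (Set.Ioi 0)))
    -- second time-derivative estimate (Lemma "second time-derivative")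
    (hsecond : (∫ t in Set.Ioi (0 : ℝ), Xμ2 t ^ 2 * Real.exp (-2 * ρ * t))
      ≤ ω ^ 2 * (∫ t in Set.Ioi (0 : ℝ), Xμ1 t ^ 2 * Real.exp (-2 * ρ * t))
        + ρ ^ 2 * (ρ / ω) ^ (2 * r) * osc ^ 2) :
    (∫ t in Set.Ioi (0 : ℝ), Rnorm t ^ 2 * Real.exp (-2 * ρ * t))
      ≤ (3 * (d + 1 : ℝ) * Cmax) ^ 2 *
        ((κA + ρ * hs + (ω * hs) ^ 2) *
          (∫ t in Set.Ioi (0 : ℝ),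
            (Xμ1 t ^ 2 + ρ⁻¹ * Xγ1 t ^ 2 + XA t ^ 2) * Real.exp (-2 * ρ * t))
          + (ρ * hs) ^ 2 * (ρ / ω) ^ (2 * r) * osc ^ 2) := by
  set K : ℝ := 3 * ((d : ℝ) + 1) ^ 2 * Cmax ^ 2 with hK
  have hK0 : 0 ≤ K := by positivity
  -- local squared bound
  have hlocsq : ∀ a t, Rloc a t ^ 2 ≤ 3 * Cmax ^ 2 *
      (hs ^ 2 * Nμ2 a t ^ 2 + hs * Nγ1 a t ^ 2 + κA * NA a t ^ 2) := by
    intro a t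
    obtain ⟨hN1, hN2, hN3⟩ := hNnn a t
    have hc0 : 0 ≤ h a / ϑ a := div_nonneg (hha a) (hϑ a).le
    have hchs := hhs' a
    have key := stmt17_aux (hRlnn a t) (hCg a).1 (mul_nonneg hc0 hN1)
      (by positivity) (mul_nonneg (Real.sqrt_nonneg _) hN3) (hloc a t)
    have hx2 : (h a / ϑ a * Nμ2 a t) ^ 2 ≤ hs ^ 2 * Nμ2 a t ^ 2 := by
      rw [mul_pow]
      exact mul_le_mul_of_nonneg_right (pow_le_pow_left₀ hc0 hchs 2) (sq_nonneg _)
    have hy2 : (Real.sqrt (ρ * (h a / ϑ a)) * (Real.sqrt ρ)⁻¹ * Nγ1 a t) ^ 2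
        ≤ hs * Nγ1 a t ^ 2 := by
      have e1 : (Real.sqrt (ρ * (h a / ϑ a)) * (Real.sqrt ρ)⁻¹ * Nγ1 a t) ^ 2
          = (ρ * (h a / ϑ a)) * ρ⁻¹ * Nγ1 a t ^ 2 := by
        rw [mul_pow, mul_pow, Real.sq_sqrt (by positivity), inv_pow, Real.sq_sqrt hρ.le]
      have e2 : ρ * (h a / ϑ a) * ρ⁻¹ = h a / ϑ a := by
        rw [mul_comm ρ (h a / ϑ a), mul_assoc, mul_inv_cancel₀ hρ.ne', mul_one]
      rw [e1, e2]
      exact mul_le_mul_of_nonneg_right hchs (sq_nonneg _)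
    have hz2 : (Real.sqrt (κ a) * NA a t) ^ 2 ≤ κA * NA a t ^ 2 := by
      rw [mul_pow, Real.sq_sqrt (hκ a).1]
      exact mul_le_mul_of_nonneg_right (hκ a).2 (sq_nonneg _)
    have hCg2 : Cg a ^ 2 ≤ Cmax ^ 2 := pow_le_pow_left₀ (hCg a).1 (hCg a).2 2
    calc Rloc a t ^ 2
        ≤ 3 * Cg a ^ 2 * ((h a / ϑ a * Nμ2 a t) ^ 2
            + (Real.sqrt (ρ * (h a / ϑ a)) * (Real.sqrt ρ)⁻¹ * Nγ1 a t) ^ 2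
            + (Real.sqrt (κ a) * NA a t) ^ 2) := key
      _ ≤ 3 * Cmax ^ 2 * ((h a / ϑ a * Nμ2 a t) ^ 2
            + (Real.sqrt (ρ * (h a / ϑ a)) * (Real.sqrt ρ)⁻¹ * Nγ1 a t) ^ 2
            + (Real.sqrt (κ a) * NA a t) ^ 2) := by
          apply mul_le_mul_of_nonneg_right (by linarith)
          positivity
      _ ≤ 3 * Cmax ^ 2 * (hs ^ 2 * Nμ2 a t ^ 2 + hs * Nγ1 a t ^ 2 + κA * NA a t ^ 2) := by
          apply mul_le_mul_of_nonneg_left (by linarith) (by positivity)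
  -- global pointwise bound
  have hpt : ∀ t, Rnorm t ^ 2 ≤ K *
      (hs ^ 2 * Xμ2 t ^ 2 + hs * Xγ1 t ^ 2 + κA * XA t ^ 2) := by
    intro t
    have h2 : ∑ a, Rloc a t ^ 2 ≤ 3 * Cmax ^ 2 *
        (hs ^ 2 * ∑ a, Nμ2 a t ^ 2 + hs * ∑ a, Nγ1 a t ^ 2 + κA * ∑ a, NA a t ^ 2) := by
      calc ∑ a, Rloc a t ^ 2
          ≤ ∑ a, 3 * Cmax ^ 2 *
            (hs ^ 2 * Nμ2 a t ^ 2 + hs * Nγ1 a t ^ 2 + κA * NA a t ^ 2) :=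
            Finset.sum_le_sum fun a _ => hlocsq a t
        _ = _ := by
            rw [← Finset.mul_sum]
            congr 1
            rw [Finset.sum_add_distrib, Finset.sum_add_distrib,
              ← Finset.mul_sum, ← Finset.mul_sum, ← Finset.mul_sum]
    have h3 : hs ^ 2 * ∑ a, Nμ2 a t ^ 2 + hs * ∑ a, Nγ1 a t ^ 2 + κA * ∑ a, NA a t ^ 2
        ≤ ((d : ℝ) + 1) * (hs ^ 2 * Xμ2 t ^ 2 + hs * Xγ1 t ^ 2 + κA * XA t ^ 2) := by
      have b1 := mul_le_mul_of_nonneg_left (hoverμ t) (by positivity : (0:ℝ) ≤ hs ^ 2)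
      have b2 := mul_le_mul_of_nonneg_left (hoverγ t) hhs
      have b3 := mul_le_mul_of_nonneg_left (hoverA t) hκA
      ring_nf
      ring_nf at b1 b2 b3 ⊢
      linarith
    calc Rnorm t ^ 2 ≤ ((d : ℝ) + 1) * ∑ a, Rloc a t ^ 2 := hover t
      _ ≤ ((d : ℝ) + 1) * (3 * Cmax ^ 2 *
            (hs ^ 2 * ∑ a, Nμ2 a t ^ 2 + hs * ∑ a, Nγ1 a t ^ 2 + κA * ∑ a, NA a t ^ 2)) :=
          mul_le_mul_of_nonneg_left h2 (by positivity)
      _ ≤ ((d : ℝ) + 1) * (3 * Cmax ^ 2 *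
            (((d : ℝ) + 1) * (hs ^ 2 * Xμ2 t ^ 2 + hs * Xγ1 t ^ 2 + κA * XA t ^ 2))) := by
          apply mul_le_mul_of_nonneg_left _ (by positivity)
          exact mul_le_mul_of_nonneg_left h3 (by positivity)
      _ = K * (hs ^ 2 * Xμ2 t ^ 2 + hs * Xγ1 t ^ 2 + κA * XA t ^ 2) := by
          rw [hK]; ring
  -- integrate the pointwise bound
  have hgin : Integrable (fun t => K * hs * (Xγ1 t ^ 2 * Real.exp (-2 * ρ * t))
      + K * κA * (XA t ^ 2 * Real.exp (-2 * ρ * t))) (volume.restrict (Set.Ioi 0)) :=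
    (hIγ1.const_mul _).add (hIA.const_mul _)
  have hg : Integrable (fun t => K * hs ^ 2 * (Xμ2 t ^ 2 * Real.exp (-2 * ρ * t))
      + (K * hs * (Xγ1 t ^ 2 * Real.exp (-2 * ρ * t))
        + K * κA * (XA t ^ 2 * Real.exp (-2 * ρ * t))))
      (volume.restrict (Set.Ioi 0)) := (hIμ2.const_mul _).add hgin
  have hmono : (∫ t in Set.Ioi (0 : ℝ), Rnorm t ^ 2 * Real.exp (-2 * ρ * t))
      ≤ ∫ t in Set.Ioi (0 : ℝ), (K * hs ^ 2 * (Xμ2 t ^ 2 * Real.exp (-2 * ρ * t))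
        + (K * hs * (Xγ1 t ^ 2 * Real.exp (-2 * ρ * t))
          + K * κA * (XA t ^ 2 * Real.exp (-2 * ρ * t)))) := by
    refine integral_mono hIR hg fun t => ?_
    have h1 : Rnorm t ^ 2 * Real.exp (-2 * ρ * t)
        ≤ (K * (hs ^ 2 * Xμ2 t ^ 2 + hs * Xγ1 t ^ 2 + κA * XA t ^ 2))
          * Real.exp (-2 * ρ * t) :=
      mul_le_mul_of_nonneg_right (hpt t) (Real.exp_pos _).le
    exact h1.trans_eq (by ring)
  rw [integral_add (hIμ2.const_mul _) hgin,
    integral_add (hIγ1.const_mul _) (hIA.const_mul _),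
    integral_const_mul, integral_const_mul, integral_const_mul] at hmono
  -- abbreviate integrals
  set IR := ∫ t in Set.Ioi (0 : ℝ), Rnorm t ^ 2 * Real.exp (-2 * ρ * t) with hIRdef
  set IM := ∫ t in Set.Ioi (0 : ℝ), Xμ2 t ^ 2 * Real.exp (-2 * ρ * t) with hIMdef
  set I1 := ∫ t in Set.Ioi (0 : ℝ), Xμ1 t ^ 2 * Real.exp (-2 * ρ * t) with hI1def
  set I2 := ∫ t in Set.Ioi (0 : ℝ), Xγ1 t ^ 2 * Real.exp (-2 * ρ * t) with hI2def
  set I3 := ∫ t in Set.Ioi (0 : ℝ), XA t ^ 2 * Real.exp (-2 * ρ * t) with hI3def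
  have hI1n : 0 ≤ I1 := integral_nonneg fun t => by positivity
  have hI2n : 0 ≤ I2 := integral_nonneg fun t => by positivity
  have hI3n : 0 ≤ I3 := integral_nonneg fun t => by positivity
  have hsplit : (∫ t in Set.Ioi (0 : ℝ),
      (Xμ1 t ^ 2 + ρ⁻¹ * Xγ1 t ^ 2 + XA t ^ 2) * Real.exp (-2 * ρ * t))
      = I1 + ρ⁻¹ * I2 + I3 := by
    have hgin2 : Integrable (fun t => ρ⁻¹ * (Xγ1 t ^ 2 * Real.exp (-2 * ρ * t))
        + XA t ^ 2 * Real.exp (-2 * ρ * t)) (volume.restrict (Set.Ioi 0)) :=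
      (hIγ1.const_mul _).add hIA
    have heq : (fun t => (Xμ1 t ^ 2 + ρ⁻¹ * Xγ1 t ^ 2 + XA t ^ 2) * Real.exp (-2 * ρ * t))
        = fun t => Xμ1 t ^ 2 * Real.exp (-2 * ρ * t)
          + (ρ⁻¹ * (Xγ1 t ^ 2 * Real.exp (-2 * ρ * t))
            + XA t ^ 2 * Real.exp (-2 * ρ * t)) := by
      funext t; ring
    rw [heq, integral_add hIμ1 hgin2, integral_add (hIγ1.const_mul _) hIA,
      integral_const_mul]
    ring
  rw [hsplit]
  -- final arithmetic
  set P : ℝ := (ρ / ω) ^ (2 * r) with hP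
  have hPn : 0 ≤ P := by positivity
  have hI2eq : I2 = ρ * (ρ⁻¹ * I2) := by
    field_simp
  set J2 : ℝ := ρ⁻¹ * I2 with hJ2
  have hJ2n : 0 ≤ J2 := mul_nonneg (by positivity) hI2n
  clear_value K IR IM I1 I2 I3 P J2
  have hch : IR ≤ K * hs ^ 2 * (ω ^ 2 * I1 + ρ ^ 2 * P * osc ^ 2)
      + K * (hs * (ρ * J2)) + K * κA * I3 := by
    have h5 := mul_le_mul_of_nonneg_left hsecond (mul_nonneg hK0 (sq_nonneg hs))
    have h6 : K * hs * I2 = K * (hs * (ρ * J2)) := by rw [hI2eq]; ring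
    linarith
  have hgoal : (3 * ((d : ℝ) + 1) * Cmax) ^ 2 = 3 * K := by rw [hK]; ring
  rw [hgoal]
  have t1 : K * hs ^ 2 * (ω ^ 2 * I1) ≤ 3 * K * ((κA + ρ * hs + (ω * hs) ^ 2) * I1) := by
    nlinarith [mul_nonneg hK0 hI1n, mul_nonneg (mul_nonneg hK0 hκA) hI1n,
      mul_nonneg (mul_nonneg (mul_nonneg hK0 hρ.le) hhs) hI1n,
      mul_nonneg (mul_nonneg hK0 (mul_nonneg (sq_nonneg ω) (sq_nonneg hs))) hI1n]
  have t2 : K * (hs * (ρ * J2)) ≤ 3 * K * ((κA + ρ * hs + (ω * hs) ^ 2) * J2) := by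
    nlinarith [mul_nonneg (mul_nonneg hK0 hκA) hJ2n,
      mul_nonneg (mul_nonneg (mul_nonneg hK0 hρ.le) hhs) hJ2n,
      mul_nonneg (mul_nonneg hK0 (mul_nonneg (sq_nonneg ω) (sq_nonneg hs))) hJ2n]
  have t3 : K * κA * I3 ≤ 3 * K * ((κA + ρ * hs + (ω * hs) ^ 2) * I3) := by
    nlinarith [mul_nonneg (mul_nonneg hK0 hκA) hI3n,
      mul_nonneg (mul_nonneg (mul_nonneg hK0 hρ.le) hhs) hI3n,
      mul_nonneg (mul_nonneg hK0 (mul_nonneg (sq_nonneg ω) (sq_nonneg hs))) hI3n]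
  have t4 : K * hs ^ 2 * (ρ ^ 2 * P * osc ^ 2) ≤ 3 * K * ((ρ * hs) ^ 2 * P * osc ^ 2) := by
    nlinarith [mul_nonneg (mul_nonneg (mul_nonneg hK0 (sq_nonneg hs))
      (mul_nonneg (sq_nonneg ρ) hPn)) (sq_nonneg osc)]
  calc IR ≤ K * hs ^ 2 * (ω ^ 2 * I1 + ρ ^ 2 * P * osc ^ 2)
        + K * (hs * (ρ * J2)) + K * κA * I3 := hch
    _ ≤ 3 * K * ((κA + ρ * hs + (ω * hs) ^ 2) * (I1 + J2 + I3)
        + (ρ * hs) ^ 2 * P * osc ^ 2) := by nlinarith [t1, t2, t3, t4]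
end
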